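/- arXiv:1304.3169 — 3 statements merged into one kernel-verified Lean document; each statement's English description precedes it below -/
import Mathlib

section
/- For every n ≥ 1, the n×n matrix M = (m_{ij}) with entries m_{ij} = (n−j)! · (i+j−2)! (indices i,j ∈ {1,…,n}) is nonsingular, i.e., has non-zero determinant. -/
/-!
Writing `(i + j)! = i! ⬝ C(i + j, i) ⬝ j!`, the Hankel matrix `((i + j)!)` is the symmetric Pascal
matrix `(C(i + j, i))` scaled on both sides by `diag(i!)`. Vandermonde's identity
`C(i + j, i) = ∑ₖ C(i, k) C(j, k)` factors the symmetric Pascal matrix as `L Lᵀ` with `L = (C(i, k))`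
lower unitriangular, so it has determinant `1` and `det ((i + j)!) = ∏ᵢ (i!)²`. The matrix of the
theorem is this Hankel matrix with its columns scaled by the nonzero factors `(n - 1 - j)!`.
-/

open Finset Matrix Nat

namespace Nat

theorem sum_range_choose_mul_choose (m n : ℕ) :
    ∑ k ∈ range (m + 1), m.choose k * n.choose k = (m + n).choose m := by
  rw [add_choose_eq, ← Finset.Nat.sum_antidiagonal_swap,
    Finset.Nat.sum_antidiagonal_eq_sum_range_succ_mk]
  refine sum_congr rfl fun k hk => ?_
  rw [Prod.swap_prod_mk, choose_symm (mem_range_succ_iff.mp hk)]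

theorem sum_range_choose_mul_choose_of_lt {m N : ℕ} (n : ℕ) (h : m < N) :
    ∑ k ∈ range N, m.choose k * n.choose k = (m + n).choose m := by
  rw [← sum_range_choose_mul_choose]
  refine (sum_subset (range_subset_range.2 h) fun k _ hk => ?_).symm
  rw [choose_eq_zero_of_lt (by simpa using hk), zero_mul]

end Nat

namespace Matrix

variable {R : Type*} [CommRing R] {n : ℕ}

theorem det_of_choose : det (of fun i k : Fin n => (i.1.choose k.1 : R)) = 1 := by
  rw [det_of_isLowerTriangular]
  · simp
  · intro i k hik
    simp [choose_eq_zero_of_lt (show i.1 < k.1 from hik)]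

theorem of_choose_add_eq_mul_transpose :
    (of fun i j : Fin n => ((i.1 + j.1).choose i.1 : R)) =
      of (fun i k : Fin n => (i.1.choose k.1 : R)) *
        (of fun i k : Fin n => (i.1.choose k.1 : R))ᵀ := by
  ext i j
  simp only [of_apply, mul_apply, transpose_apply]
  rw [← Nat.sum_range_choose_mul_choose_of_lt j.1 i.2]
  push_cast
  exact (Fin.sum_univ_eq_sum_range (fun k => (i.1.choose k * j.1.choose k : R)) n).symm

theorem det_of_choose_add : det (of fun i j : Fin n => ((i.1 + j.1).choose i.1 : R)) = 1 := by
  rw [of_choose_add_eq_mul_transpose, det_mul, det_transpose, det_of_choose, one_mul]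

theorem of_factorial_add_eq :
    (of fun i j : Fin n => ((i.1 + j.1)! : R)) =
      diagonal (fun i : Fin n => (i.1 ! : R)) *
        of (fun i j : Fin n => ((i.1 + j.1).choose i.1 : R)) *
          diagonal (fun j : Fin n => (j.1 ! : R)) := by
  ext i j
  rw [mul_diagonal, diagonal_mul, of_apply, of_apply, choose_symm_add,
    ← add_choose_mul_factorial_mul_factorial]
  push_cast
  ring

theorem det_of_factorial_add :
    det (of fun i j : Fin n => ((i.1 + j.1)! : R)) = ∏ i : Fin n, (i.1 ! : R) ^ 2 := by
  rw [of_factorial_add_eq, det_mul, det_mul, det_diagonal, det_of_choose_add, mul_one,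
    ← prod_mul_distrib]
  simp only [sq]

end Matrix

theorem assignment_coefficient_matrix_det_ne_zero_general (n : ℕ) :
    Matrix.det (Matrix.of fun i j : Fin n =>
      ((Nat.factorial (n - (j.1 + 1)) * Nat.factorial (i.1 + j.1) : ℕ) : ℚ)) ≠ 0 := by
  have hM : (Matrix.of fun i j : Fin n =>
      ((Nat.factorial (n - (j.1 + 1)) * Nat.factorial (i.1 + j.1) : ℕ) : ℚ)) =
        of (fun i j : Fin n => ((i.1 + j.1)! : ℚ)) *
          diagonal (fun j : Fin n => ((n - (j.1 + 1))! : ℚ)) := by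
    ext i j
    rw [mul_diagonal, of_apply, of_apply, Nat.cast_mul, mul_comm]
  rw [hM, det_mul, det_diagonal, det_of_factorial_add]
  positivity

/-- The `n × n` matrix with (1-based) entries `m_{ij} = (n - j)! ⬝ (i + j - 2)!`
(row index `i`, column index `j`) is nonsingular, for every `n ≥ 1`.
With 0-based indices `i, j : Fin n`, the entry is `(n - (j+1))! ⬝ (i + j)!`. -/
theorem assignment_coefficient_matrix_det_ne_zero (n : ℕ) (hn : 1 ≤ n) :
    Matrix.det (Matrix.of fun i j : Fin n =>
      ((Nat.factorial (n - (j.1 + 1)) * Nat.factorial (i.1 + j.1) : ℕ) : ℚ)) ≠ 0 :=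
  assignment_coefficient_matrix_det_ne_zero_general n
end

section
/- Let R satisfy (∗) and suppose sd(R,π) = {a} for some permutation π of N. Then for every agent i ∈ N with a ∈ max_{R_i}(A) there exists a permutation π' of N with π'(1) = i and sd(R,π') = {a}. -/
/-- `maxSet r B` is the set of most preferred alternatives from `B`
according to the (weak) preference relation `r`. -/
def maxSet {A : Type*} (r : A → A → Prop) (B : Set A) : Set A :=
  {x | x ∈ B ∧ ∀ y ∈ B, r x y}

/-- `sdPrefix R π t` is the set of alternatives surviving serial dictatorship after the
first `t` dictators `π 0, …, π (t-1)` have refined the set, starting from all of `A`. -/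
def sdPrefix {n : ℕ} {A : Type*} (R : Fin n → A → A → Prop) (π : Equiv.Perm (Fin n)) :
    ℕ → Set A
  | 0 => Set.univ
  | t + 1 => if h : t < n then maxSet (R (π ⟨t, h⟩)) (sdPrefix R π t) else sdPrefix R π t

/-- Serial dictatorship: the set of alternatives remaining after all `n` dictators. -/
def sd {n : ℕ} {A : Type*} (R : Fin n → A → A → Prop) (π : Equiv.Perm (Fin n)) : Set A :=
  sdPrefix R π n

/-!
Call `l` a predecessor of `j` under `σ` if `l` comes before `j` in the order `σ`. By transitivity,
once `a` survives the first `t` dictators, the survivors are exactly the alternatives that all of them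
find indifferent to `a`. Hence `a ∈ sd R σ` says: every agent `j` weakly prefers `a` to every `b`
that all predecessors of `j` find indifferent to `a`, and `sd R σ` is then the common indifference
class of `a`, which (∗) reduces to `{a}`. Moving `i` to the front by a cycle only adds `i` to the
predecessors of the other agents, which weakens the premise of that condition for them, while `i`
itself weakly prefers `a` to everything.
-/

theorem Fin.cycleRange_lt_cycleRange {n : ℕ} {k x y : Fin n} (hxy : x < y) (hy : y ≠ k) :
    Fin.cycleRange k x < Fin.cycleRange k y := by
  rw [Fin.lt_def] at hxy ⊢
  have hy' : (y : ℕ) ≠ k := Fin.val_ne_of_ne hy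
  rcases lt_or_gt_of_ne hy' with hyk | hky
  · rw [Fin.coe_cycleRange_of_lt hyk, Fin.coe_cycleRange_of_lt (hxy.trans hyk)]
    omega
  · rw [Fin.cycleRange_of_gt hky]
    rcases le_or_gt x k with hxk | hkx
    · rw [Fin.coe_cycleRange_of_le hxk]
      split_ifs <;> omega
    · rw [Fin.cycleRange_of_gt hkx]
      exact hxy

theorem Fin.cycleRange_symm_mk_zero {n : ℕ} (hn : 0 < n) (k : Fin n) :
    (Fin.cycleRange k).symm ⟨0, hn⟩ = k := by
  rw [Equiv.symm_apply_eq]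
  ext
  rw [Fin.coe_cycleRange_of_le le_rfl, if_pos rfl]

theorem mem_maxSet_iff_of_mem {A : Type*} {r : A → A → Prop} (htr : Transitive r) {S : Set A}
    {a b : A} (ha : a ∈ maxSet r S) : b ∈ maxSet r S ↔ b ∈ S ∧ r b a ∧ r a b :=
  ⟨fun hb => ⟨hb.1, hb.2 a ha.1, ha.2 b hb.1⟩,
    fun ⟨hbS, hba, _⟩ => ⟨hbS, fun y hy => htr hba (ha.2 y hy)⟩⟩

section SerialDictatorship

variable {n : ℕ} {A : Type*} {R : Fin n → A → A → Prop} {σ : Equiv.Perm (Fin n)} {a : A}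

theorem sdPrefix_succ {t : ℕ} (ht : t < n) :
    sdPrefix R σ (t + 1) = maxSet (R (σ ⟨t, ht⟩)) (sdPrefix R σ t) := by
  rw [sdPrefix, dif_pos ht]

theorem symm_apply_lt_succ_iff {l : Fin n} {t : ℕ} (ht : t < n) :
    (σ.symm l : ℕ) < t + 1 ↔ (σ.symm l : ℕ) < t ∨ l = σ ⟨t, ht⟩ := by
  rw [Nat.lt_succ_iff_lt_or_eq, ← Equiv.symm_apply_eq, Fin.ext_iff]

variable (htrans : ∀ j, Transitive (R j))
include htrans

theorem sdPrefix_eq_of_mem {t : ℕ} (ht : t ≤ n) (ha : a ∈ sdPrefix R σ t) :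
    sdPrefix R σ t = {b | ∀ l, (σ.symm l : ℕ) < t → R l b a ∧ R l a b} := by
  induction t with
  | zero => ext; simp [sdPrefix]
  | succ t ih =>
    have htn : t < n := ht
    rw [sdPrefix_succ htn] at ha ⊢
    ext b
    rw [mem_maxSet_iff_of_mem (htrans _) ha, ih htn.le ha.1, Set.mem_ofPred_eq, Set.mem_ofPred_eq]
    constructor
    · rintro ⟨hpre, hlast⟩ l hl
      rcases (symm_apply_lt_succ_iff htn).1 hl with hl | rfl
      exacts [hpre l hl, hlast]
    · intro h
      exact ⟨fun l hl => h l (by omega), h _ (by simp)⟩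

theorem mem_sdPrefix_iff {t : ℕ} (ht : t ≤ n) :
    a ∈ sdPrefix R σ t ↔ ∀ j, (σ.symm j : ℕ) < t →
      ∀ b, (∀ l, σ.symm l < σ.symm j → R l b a ∧ R l a b) → R j a b := by
  induction t with
  | zero => simp [sdPrefix]
  | succ t ih =>
    have htn : t < n := ht
    have hlast : ∀ l, σ.symm l < σ.symm (σ ⟨t, htn⟩) ↔ (σ.symm l : ℕ) < t := by
      simp [Fin.lt_def]
    rw [sdPrefix_succ htn]
    constructor
    · rintro ⟨haS, hmax⟩ j hj b hb
      rcases (symm_apply_lt_succ_iff htn).1 hj with hj | rfl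
      · exact (ih htn.le).1 haS j hj b hb
      · refine hmax b ?_
        rw [sdPrefix_eq_of_mem htrans htn.le haS]
        exact fun l hl => hb l ((hlast l).2 hl)
    · intro h
      have haS := (ih htn.le).2 fun j hj => h j (by omega)
      refine ⟨haS, fun b hb => h _ (by simp) b fun l hl => ?_⟩
      rw [sdPrefix_eq_of_mem htrans htn.le haS] at hb
      exact hb l ((hlast l).1 hl)

theorem mem_sd_iff :
    a ∈ sd R σ ↔ ∀ j b, (∀ l, σ.symm l < σ.symm j → R l b a ∧ R l a b) → R j a b := by
  rw [sd, mem_sdPrefix_iff htrans le_rfl]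
  simp only [Fin.is_lt, true_implies]

theorem sd_eq_of_mem (ha : a ∈ sd R σ) : sd R σ = {b | ∀ l, R l b a ∧ R l a b} := by
  rw [sd, sdPrefix_eq_of_mem htrans le_rfl ha]
  simp only [Fin.is_lt, true_implies]

theorem mem_sd_of_predecessors_subset {τ : Equiv.Perm (Fin n)} (ha : a ∈ sd R σ)
    (h : ∀ j, (∀ b, R j a b) ∨ ∀ l, σ.symm l < σ.symm j → τ.symm l < τ.symm j) :
    a ∈ sd R τ := by
  rw [mem_sd_iff htrans] at ha ⊢
  intro j b hb
  rcases h j with hj | hj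
  · exact hj b
  · exact ha j b fun l hl => hb l (hj l hl)

end SerialDictatorship

theorem sd_first_dictator_general {n : ℕ} {A : Type*} (hn : 0 < n)
    (R : Fin n → A → A → Prop)
    (htrans : ∀ i, Transitive (R i))
    (hstar : ∀ a b : A, (∀ i, R i a b ∧ R i b a) → a = b)
    (π : Equiv.Perm (Fin n)) (a : A) (ha : sd R π = {a})
    (i : Fin n) (hi : a ∈ maxSet (R i) Set.univ) :
    ∃ π' : Equiv.Perm (Fin n), π' ⟨0, hn⟩ = i ∧ sd R π' = {a} := by
  set c := Fin.cycleRange (π.symm i)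
  refine ⟨π * c.symm, by simp [c, Fin.cycleRange_symm_mk_zero], ?_⟩
  have ha' : a ∈ sd R (π * c.symm) := by
    refine mem_sd_of_predecessors_subset htrans (ha ▸ Set.mem_singleton a : a ∈ sd R π) fun j => ?_
    by_cases hj : j = i
    · exact .inl fun b => hj ▸ hi.2 b trivial
    · exact .inr fun l hl => Fin.cycleRange_lt_cycleRange hl (π.symm.injective.ne hj)
  refine Set.eq_singleton_iff_unique_mem.2 ⟨ha', fun b hb => hstar b a ?_⟩
  rwa [sd_eq_of_mem htrans ha'] at hb

/-- If `R` is a complete and transitive profile satisfying (∗), `sd R π = {a}` for some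
permutation `π`, and agent `i` has `a` among his most preferred alternatives in `A`,
then there is a permutation `π'` with `i` in the first position and `sd R π' = {a}`. -/
theorem sd_first_dictator {n : ℕ} {A : Type*} [Finite A] [Nonempty A] (hn : 0 < n)
    (R : Fin n → A → A → Prop)
    (hcomp : ∀ i x y, R i x y ∨ R i y x)
    (htrans : ∀ i, Transitive (R i))
    (hstar : ∀ a b : A, (∀ i, R i a b ∧ R i b a) → a = b)
    (π : Equiv.Perm (Fin n)) (a : A) (ha : sd R π = {a})
    (i : Fin n) (hi : a ∈ maxSet (R i) Set.univ) :
    ∃ π' : Equiv.Perm (Fin n), π' ⟨0, hn⟩ = i ∧ sd R π' = {a} :=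
  sd_first_dictator_general hn R htrans hstar π a ha i hi
end

section
/- Let R satisfy (∗) and let a ∈ A. Consider the greedy procedure: initialize N' = N and A' = A; while N' ≠ ∅, if no agent i ∈ N' has a ∈ max_{R_i}(A') the procedure fails, otherwise pick the least such agent i, remove i from N', and replace A' by max_{R_i}(A'). Then a is in the support of the RSD lottery (i.e., sd(R,π) = {a} for some permutation π of N) if and only if the greedy procedure never fails; moreover, in that case the order π* in which the agents are picked by the procedure satisfies sd(R,π*) = {a}. -/
open scoped Classical

/-- The greedy procedure of Algorithm 1: given a working set `N'` of agents and a working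
set `A'` of alternatives, repeatedly pick the least agent `i ∈ N'` having `a` among his most
preferred alternatives in `A'` (failing, i.e. returning `none`, if there is no such agent),
remove `i` from `N'` and replace `A'` by `maxSet (R i) A'`, until `N' = ∅`.  On success it
returns the list of picked agents in order. `fuel` bounds the number of iterations. -/
noncomputable def greedy {n : ℕ} {A : Type*} (R : Fin n → A → A → Prop) (a : A) :
    ℕ → Finset (Fin n) → Set A → Option (List (Fin n))
  | 0, _, _ => some []
  | fuel + 1, N', A' =>
      if N' = ∅ then some []
      else
        let C := N'.filter (fun i => a ∈ maxSet (R i) A')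
        if h : C.Nonempty then
          let i := C.min' h
          (greedy R a fuel (N'.erase i) (maxSet (R i) A')).map (fun L => i :: L)
        else none

/-! Run serial dictatorship along a list of agents. An exchange argument shows that if `a`
survives some order and `a` is among agent `i`'s favourites in the current set, then `a` still
survives once `i` is moved to the front. So whenever some order yields `a`, the greedy procedure
can always move on, and by induction it never fails. Conversely the greedy order keeps `a`
alive at every step; at the end all agents are indifferent between `a` and every survivor,
so by (∗) the outcome is `{a}`. -/

lemma List.length_eq_of_nodup_of_toFinset_eq_univ {n : ℕ} {L : List (Fin n)} (hnd : L.Nodup)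
    (hL : L.toFinset = Finset.univ) : L.length = n := by
  rw [← List.toFinset_card_of_nodup hnd, hL, Finset.card_univ, Fintype.card_fin]

lemma List.exists_perm_ofFn_eq {n : ℕ} {L : List (Fin n)} (hnd : L.Nodup)
    (hL : L.toFinset = Finset.univ) : ∃ π : Equiv.Perm (Fin n), List.ofFn π = L := by
  have hlen := List.length_eq_of_nodup_of_toFinset_eq_univ hnd hL
  refine ⟨(finCongr hlen.symm).trans
    (hnd.getEquivOfForallMemList L (by simp [← List.mem_toFinset, hL])), ?_⟩
  apply List.ext_getElem <;> simp [hlen]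

lemma List.eq_ofFn_of_getElem? {n : ℕ} {α : Type*} {L : List α} {f : Fin n → α}
    (hlen : L.length = n) (h : ∀ t : Fin n, L[t.1]? = some (f t)) : L = List.ofFn f :=
  List.ext_getElem? fun k => by
    by_cases hk : k < n
    · simpa [hk] using h ⟨k, hk⟩
    · simp [hk, List.getElem?_eq_none (by omega : L.length ≤ k)]

section SerialDictatorship

variable {n : ℕ} {A : Type*} (R : Fin n → A → A → Prop)

def sdList (L : List (Fin n)) (S : Set A) : Set A :=
  L.foldl (fun S i => maxSet (R i) S) S

lemma sdList_cons (i : Fin n) (L : List (Fin n)) (S : Set A) :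
    sdList R (i :: L) S = sdList R L (maxSet (R i) S) := rfl

lemma sdList_append (L L' : List (Fin n)) (S : Set A) :
    sdList R (L ++ L') S = sdList R L' (sdList R L S) :=
  List.foldl_append

lemma maxSet_subset (r : A → A → Prop) (S : Set A) : maxSet r S ⊆ S := fun _ hx => hx.1

lemma sdList_subset : ∀ (L : List (Fin n)) (S : Set A), sdList R L S ⊆ S
  | [], _ => subset_rfl
  | _ :: L, _ => (sdList_subset L _).trans (maxSet_subset _ _)

lemma mem_maxSet_of_mem_sdList_cons {i : Fin n} {L : List (Fin n)} {S : Set A} {a : A}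
    (ha : a ∈ sdList R (i :: L) S) : a ∈ maxSet (R i) S :=
  sdList_subset R L _ ha

lemma mem_maxSet_of_subset {r : A → A → Prop} {S T : Set A} {a : A} (hTS : T ⊆ S)
    (haS : a ∈ maxSet r S) (haT : a ∈ T) : a ∈ maxSet r T :=
  ⟨haT, fun y hy => haS.2 y (hTS hy)⟩

lemma maxSet_subset_maxSet_of_mem {r : A → A → Prop} (hr : Transitive r) {S T : Set A} {a : A}
    (hTS : T ⊆ S) (haS : a ∈ maxSet r S) (haT : a ∈ T) : maxSet r T ⊆ maxSet r S :=
  fun _ hx => ⟨hTS hx.1, fun y hy => hr (hx.2 a haT) (haS.2 y hy)⟩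

variable {R}

lemma sdList_mono_of_mem (htrans : ∀ i, Transitive (R i)) {a : A} :
    ∀ (L : List (Fin n)) {S T : Set A}, T ⊆ S → a ∈ T → a ∈ sdList R L S →
      a ∈ sdList R L T ∧ sdList R L T ⊆ sdList R L S
  | [], _, _, hTS, haT, _ => ⟨haT, hTS⟩
  | i :: L, _, _, hTS, haT, haS => by
      have hi := mem_maxSet_of_mem_sdList_cons R haS
      exact sdList_mono_of_mem htrans L (maxSet_subset_maxSet_of_mem (htrans i) hTS hi haT)
        (mem_maxSet_of_subset hTS hi haT) haS

lemma mem_sdList_erase (htrans : ∀ i, Transitive (R i)) {a : A} {i : Fin n}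
    {L : List (Fin n)} {S : Set A} (hiL : i ∈ L) (ha : a ∈ sdList R L S)
    (hai : a ∈ maxSet (R i) S) : a ∈ sdList R (L.erase i) (maxSet (R i) S) := by
  obtain ⟨L₁, L₂, -, rfl, herase⟩ := List.exists_erase_eq hiL
  rw [herase, sdList_append]
  rw [sdList_append, sdList_cons] at ha
  have haL₁ : a ∈ sdList R L₁ S := maxSet_subset _ _ (sdList_subset R L₂ _ ha)
  obtain ⟨haT, hTS⟩ := sdList_mono_of_mem htrans L₁ (maxSet_subset (R i) S) hai haL₁
  have hT : sdList R L₁ (maxSet (R i) S) ⊆ maxSet (R i) (sdList R L₁ S) := fun x hx =>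
    ⟨hTS hx, fun y hy => (sdList_subset R L₁ _ hx).2 y (sdList_subset R L₁ S hy)⟩
  exact (sdList_mono_of_mem htrans L₂ hT haT ha).1

lemma rel_of_mem_sdList {L : List (Fin n)} {S : Set A} {b c : A} {i : Fin n} (hiL : i ∈ L)
    (hb : b ∈ sdList R L S) (hc : c ∈ sdList R L S) : R i b c := by
  obtain ⟨L₁, L₂, rfl⟩ := List.append_of_mem hiL
  rw [sdList_append] at hb hc
  exact (mem_maxSet_of_mem_sdList_cons R hb).2 c (mem_maxSet_of_mem_sdList_cons R hc).1

lemma sdList_eq_singleton (hstar : ∀ a b : A, (∀ i, R i a b ∧ R i b a) → a = b)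
    {L : List (Fin n)} {S : Set A} {a : A} (hL : ∀ i, i ∈ L) (ha : a ∈ sdList R L S) :
    sdList R L S = {a} :=
  Set.eq_singleton_iff_unique_mem.mpr ⟨ha, fun b hb =>
    hstar b a fun i => ⟨rel_of_mem_sdList (hL i) hb ha, rel_of_mem_sdList (hL i) ha hb⟩⟩

lemma sdPrefix_eq_sdList_take (π : Equiv.Perm (Fin n)) {t : ℕ} (ht : t ≤ n) :
    sdPrefix R π t = sdList R ((List.ofFn π).take t) Set.univ := by
  induction t with
  | zero => rfl
  | succ t ih =>
    have ht' : t < n := ht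
    have htake : (List.ofFn π).take (t + 1) = (List.ofFn π).take t ++ [π ⟨t, ht'⟩] := by
      simp [List.take_add_one, ht']
    rw [sdPrefix, dif_pos ht', ih ht'.le, htake, sdList_append]
    rfl

lemma sd_eq_sdList_ofFn (π : Equiv.Perm (Fin n)) :
    sd R π = sdList R (List.ofFn π) Set.univ := by
  rw [sd, sdPrefix_eq_sdList_take π le_rfl, List.take_of_length_le (List.length_ofFn).le]

end SerialDictatorship

section Greedy

variable {n : ℕ} {A : Type*} {R : Fin n → A → A → Prop} {a : A}

lemma greedy_succ_eq_none {fuel : ℕ} {N' : Finset (Fin n)} {A' : Set A} (hN : N' ≠ ∅)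
    (hC : ∀ j ∈ N', a ∉ maxSet (R j) A') : greedy R a (fuel + 1) N' A' = none := by
  have hC' : ¬(N'.filter fun i => a ∈ maxSet (R i) A').Nonempty := by
    simpa [Finset.filter_nonempty_iff] using hC
  rw [greedy, if_neg hN, dif_neg hC']

-- Which eligible agent is picked plays no role in the correctness argument.
lemma exists_greedy_succ_eq_map {fuel : ℕ} {N' : Finset (Fin n)} {A' : Set A} (hN : N' ≠ ∅)
    (hC : ∃ j ∈ N', a ∈ maxSet (R j) A') :
    ∃ i ∈ N', a ∈ maxSet (R i) A' ∧ greedy R a (fuel + 1) N' A' =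
      (greedy R a fuel (N'.erase i) (maxSet (R i) A')).map (List.cons i) := by
  have hC' : (N'.filter fun i => a ∈ maxSet (R i) A').Nonempty := by
    simpa [Finset.filter_nonempty_iff] using hC
  obtain ⟨hiN, hia⟩ := Finset.mem_filter.mp (Finset.min'_mem _ hC')
  exact ⟨_, hiN, hia, by rw [greedy, if_neg hN, dif_pos hC']⟩

lemma greedy_spec_of_eq_some : ∀ (fuel : ℕ) {N' : Finset (Fin n)} {A' : Set A}
    {L : List (Fin n)}, N'.card = fuel → a ∈ A' → greedy R a fuel N' A' = some L →
      L.Nodup ∧ L.toFinset = N' ∧ a ∈ sdList R L A'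
  | 0, N', _, _, hcard, haA, hL => by
      rw [greedy, Option.some_inj] at hL
      subst hL
      exact ⟨List.nodup_nil, (Finset.card_eq_zero.mp hcard).symm, haA⟩
  | fuel + 1, N', A', L, hcard, _, hL => by
      have hN : N' ≠ ∅ := Finset.nonempty_iff_ne_empty.mp (Finset.card_pos.mp (by omega))
      by_cases hC : ∃ j ∈ N', a ∈ maxSet (R j) A'
      · obtain ⟨i, hiN, hia, hstep⟩ := exists_greedy_succ_eq_map (fuel := fuel) hN hC
        obtain ⟨L', hL', rfl⟩ := Option.map_eq_some_iff.mp (hstep ▸ hL)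
        obtain ⟨hnd, hfin, ha⟩ := greedy_spec_of_eq_some fuel
          (by rw [Finset.card_erase_of_mem hiN, hcard]; rfl) hia hL'
        have hiL' : i ∉ L' := by simp [← List.mem_toFinset, hfin]
        exact ⟨List.nodup_cons.mpr ⟨hiL', hnd⟩,
          by rw [List.toFinset_cons, hfin, Finset.insert_erase hiN], ha⟩
      · push Not at hC
        simp [greedy_succ_eq_none hN hC] at hL

lemma greedy_isSome_of_mem_sdList (htrans : ∀ i, Transitive (R i)) : ∀ (fuel : ℕ)
    {N' : Finset (Fin n)} {A' : Set A} {L : List (Fin n)}, N'.card = fuel → L.Nodup →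
      L.toFinset = N' → a ∈ sdList R L A' → (greedy R a fuel N' A').isSome
  | 0, _, _, _, _, _, _, _ => by rw [greedy]; rfl
  | fuel + 1, N', A', L, hcard, hnd, hfin, ha => by
      have hN : N' ≠ ∅ := Finset.nonempty_iff_ne_empty.mp (Finset.card_pos.mp (by omega))
      obtain ⟨j, L', rfl⟩ : ∃ j L', L = j :: L' := List.exists_cons_of_ne_nil
        (by rintro rfl; exact hN hfin.symm)
      have hC : ∃ j ∈ N', a ∈ maxSet (R j) A' :=
        ⟨j, by simp [← hfin], mem_maxSet_of_mem_sdList_cons R ha⟩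
      obtain ⟨i, hiN, hia, hstep⟩ := exists_greedy_succ_eq_map (fuel := fuel) hN hC
      have hiL : i ∈ j :: L' := by rwa [← List.mem_toFinset, hfin]
      rw [hstep, Option.isSome_map]
      refine greedy_isSome_of_mem_sdList htrans fuel
        (by rw [Finset.card_erase_of_mem hiN, hcard]; rfl) (hnd.erase i) ?_
        (mem_sdList_erase htrans hiL ha hia)
      ext x
      simp [hnd.mem_erase_iff, ← hfin]

end Greedy

theorem greedy_characterizes_rsd_support_general {n : ℕ} {A : Type*}
    (R : Fin n → A → A → Prop)
    (htrans : ∀ i, Transitive (R i))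
    (hstar : ∀ a b : A, (∀ i, R i a b ∧ R i b a) → a = b)
    (a : A) :
    ((∃ π : Equiv.Perm (Fin n), sd R π = {a}) ↔
        (greedy R a n Finset.univ Set.univ).isSome = true) ∧
      ∀ L : List (Fin n), greedy R a n Finset.univ Set.univ = some L →
        ∀ π : Equiv.Perm (Fin n), (∀ t : Fin n, L[t.1]? = some (π t)) →
          sd R π = {a} := by
  have hspec L (hL : greedy R a n Finset.univ Set.univ = some L) :=
    greedy_spec_of_eq_some n (Finset.card_fin n) (Set.mem_univ a) hL
  have hpicked : ∀ L : List (Fin n), greedy R a n Finset.univ Set.univ = some L →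
      ∀ π : Equiv.Perm (Fin n), (∀ t : Fin n, L[t.1]? = some (π t)) → sd R π = {a} := by
    intro L hL π hπ
    obtain ⟨hnd, hfin, ha⟩ := hspec L hL
    have hLπ := List.eq_ofFn_of_getElem? (List.length_eq_of_nodup_of_toFinset_eq_univ hnd hfin) hπ
    rw [sd_eq_sdList_ofFn, ← hLπ]
    exact sdList_eq_singleton hstar (by simp [← List.mem_toFinset, hfin]) ha
  refine ⟨⟨fun ⟨π, hπ⟩ => ?_, fun hsome => ?_⟩, hpicked⟩
  · refine greedy_isSome_of_mem_sdList htrans n (Finset.card_fin n)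
      (List.nodup_ofFn.mpr π.injective) ?_ (by rw [← sd_eq_sdList_ofFn, hπ]; rfl)
    ext i
    simpa using ⟨π.symm i, π.apply_symm_apply i⟩
  · obtain ⟨L, hL⟩ := Option.isSome_iff_exists.mp hsome
    obtain ⟨hnd, hfin, -⟩ := hspec L hL
    obtain ⟨π, rfl⟩ := List.exists_perm_ofFn_eq hnd hfin
    exact ⟨π, hpicked _ hL π (by simp)⟩

/-- Correctness of the greedy procedure (Algorithm 1): for a complete and transitive profile
`R` satisfying (∗), an alternative `a` is in the support of the RSD lottery (i.e. `sd R π = {a}`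
for some permutation `π`) iff the greedy procedure started from `N' = N` and `A' = A` never
fails; moreover, on success, the permutation `π*` listing the agents in the order they were
picked satisfies `sd R π* = {a}`. -/
theorem greedy_characterizes_rsd_support {n : ℕ} {A : Type*} [Finite A] [Nonempty A]
    (R : Fin n → A → A → Prop)
    (hcomp : ∀ i x y, R i x y ∨ R i y x)
    (htrans : ∀ i, Transitive (R i))
    (hstar : ∀ a b : A, (∀ i, R i a b ∧ R i b a) → a = b)
    (a : A) :
    ((∃ π : Equiv.Perm (Fin n), sd R π = {a}) ↔
        (greedy R a n Finset.univ Set.univ).isSome = true) ∧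
      ∀ L : List (Fin n), greedy R a n Finset.univ Set.univ = some L →
        ∀ π : Equiv.Perm (Fin n), (∀ t : Fin n, L[t.1]? = some (π t)) →
          sd R π = {a} :=
  greedy_characterizes_rsd_support_general R htrans hstar a
end
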